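/- For any λ ∈ P_{kn} and integer r, the cylindric loops λ[r] and λ↓[r↓] define the same loop on the torus T_{kn}, where r↓ = r + diag_0(λ) and λ↓ is the partition whose 01-word is the cyclic rotation of ω(λ) by k positions. -/

import Mathlib

open Finset

/-- The set `P_{kn}` of partitions fitting in a `k × (n-k)` rectangle,
represented as antitone functions `Fin k → ℕ` bounded by `n - k`. -/
def PknFinset (k n : ℕ) : Finset (Fin k → ℕ) :=
  ((Finset.univ : Finset (Fin k → Fin (n - k + 1))).image (fun f i => (f i : ℕ))).filter
    (fun lam => ∀ i j : Fin k, i ≤ j → lam j ≤ lam i)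

/-- The 01-word of a partition `λ ∈ P_{kn}`: position `j` (0-based; 1-based `j+1`)
carries a `1` iff `j + 1 = λ_i + (k + 1 - i)` for some row `i`. -/
def omegaWord (n : ℕ) {k : ℕ} (lam : Fin k → ℕ) : Fin n → Bool :=
  fun j => decide (∃ i : Fin k, lam i + (k - (i : ℕ)) = (j : ℕ) + 1)

/-- The complement partition `λ∨`, with `λ∨_i = n - k - λ_{k+1-i}`. -/
def complP (n k : ℕ) (lam : Fin k → ℕ) : Fin k → ℕ :=
  fun i => (n - k) - lam (Fin.rev i)

/-- Size of the Durfee square of `λ` (number of boxes on the main diagonal). -/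
def diag0 {k : ℕ} (lam : Fin k → ℕ) : ℕ :=
  (Finset.univ.filter (fun i : Fin k => (i : ℕ) < lam i)).card

/-- Number of boxes of `λ` on the `i`-th diagonal. -/
def diagI {k : ℕ} (lam : Fin k → ℕ) (i : ℤ) : ℕ :=
  (Finset.univ.filter (fun a : Fin k => 0 ≤ (a : ℤ) + i ∧ (a : ℤ) + 1 + i ≤ (lam a : ℤ))).card

/-- `|λ| = λ_1 + ⋯ + λ_k`. -/
def psize {k : ℕ} (lam : Fin k → ℕ) : ℕ := ∑ i, lam i

/-- The value at index `t` of the cylindric loop `λ[r]`: the `(k,n)`-periodic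
weakly decreasing sequence with `λ[r]_{i+r} = λ_i + r` for `1 ≤ i ≤ k`. -/
def loopVal (n : ℕ) {k : ℕ} (lam : Fin k → ℕ) (r t : ℤ) : ℤ :=
  if h : 0 < k then
    (lam ⟨((t - r - 1) % (k : ℤ)).toNat, by
      have hk0 : ((k : ℤ)) ≠ 0 := by exact_mod_cast h.ne'
      have h1 : 0 ≤ (t - r - 1) % (k : ℤ) := Int.emod_nonneg _ hk0
      have h2 : (t - r - 1) % (k : ℤ) < (k : ℤ) := Int.emod_lt_of_pos _ (by exact_mod_cast h)
      omega⟩ : ℤ) + r - ((t - r - 1) / (k : ℤ)) * ((n : ℤ) - (k : ℤ))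
  else 0

/-- The cylindric diagram of shape `λ[r]/μ[s]`, as a `Shift`-invariant subset of `ℤ²`
(whose quotient modulo `(-k, n-k)ℤ` is the diagram in the cylinder). -/
def cylDiagram (n : ℕ) {k : ℕ} (lam mu : Fin k → ℕ) (r s : ℤ) : Set (ℤ × ℤ) :=
  {p | loopVal n mu s p.1 < p.2 ∧ p.2 ≤ loopVal n lam r p.1}

/-- The cylindric shape `λ[r]/μ[s]` is toric: the projection of its diagram from the
cylinder `ℤ²/(-k, n-k)ℤ` to the torus `(ℤ/k) × (ℤ/(n-k))` is injective. -/
def IsToricShape (n : ℕ) {k : ℕ} (lam mu : Fin k → ℕ) (r s : ℤ) : Prop :=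
  ∀ p q : ℤ × ℤ, p ∈ cylDiagram n lam mu r s → q ∈ cylDiagram n lam mu r s →
    (k : ℤ) ∣ (q.1 - p.1) → ((n : ℤ) - k) ∣ (q.2 - p.2) →
    ∃ m : ℤ, q.1 = p.1 - m * k ∧ q.2 = p.2 + m * ((n : ℤ) - k)

/-- A semi-standard cylindric tableau of shape `λ/d/μ = λ[d]/μ[0]`, encoded as a
`Shift`-periodic function on `ℤ²` that is positive exactly on the diagram, weakly
increasing along rows and strictly increasing along columns. -/
def IsCylTableau (n : ℕ) {k : ℕ} (lam mu : Fin k → ℕ) (d : ℕ) (T : ℤ × ℤ → ℕ) : Prop :=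
  (∀ p : ℤ × ℤ, p ∈ cylDiagram n lam mu (d : ℤ) 0 ↔ 0 < T p) ∧
  (∀ p : ℤ × ℤ, T (p.1 - (k : ℤ), p.2 + ((n : ℤ) - k)) = T p) ∧
  (∀ p : ℤ × ℤ, p ∈ cylDiagram n lam mu (d : ℤ) 0 →
      (p.1, p.2 + 1) ∈ cylDiagram n lam mu (d : ℤ) 0 → T p ≤ T (p.1, p.2 + 1)) ∧
  (∀ p : ℤ × ℤ, p ∈ cylDiagram n lam mu (d : ℤ) 0 →
      (p.1 + 1, p.2) ∈ cylDiagram n lam mu (d : ℤ) 0 → T p < T (p.1 + 1, p.2))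

/-- The number of entries of the cylindric tableau `T` equal to `c`, counted once per
`Shift`-orbit (rows `1,…,k` form a fundamental domain). -/
noncomputable def cylWeight (k : ℕ) (T : ℤ × ℤ → ℕ) (c : ℕ) : ℕ :=
  {p : ℤ × ℤ | 1 ≤ p.1 ∧ p.1 ≤ (k : ℤ) ∧ T p = c}.ncard

/-- Number of semi-standard cylindric tableaux of shape `λ/d/μ` with weight `β`
(entries taken among `1, …, l`). -/
noncomputable def tabCount (n : ℕ) {k : ℕ} (lam mu : Fin k → ℕ) (d : ℕ) {l : ℕ} (beta : Fin l → ℕ) : ℕ :=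
  {T : ℤ × ℤ → ℕ | IsCylTableau n lam mu d T ∧
    (∀ i : Fin l, cylWeight k T ((i : ℕ) + 1) = beta i) ∧
    (∀ c : ℕ, l < c → cylWeight k T c = 0)}.ncard

/-- The elementary symmetric generator `e_t` of `ℤ[q, e_1, …, e_k]` (zero out of range,
`1` for `t = 0`).  The variable `none` is the quantum parameter `q`. -/
noncomputable def epolyZ (k : ℕ) (t : ℤ) : MvPolynomial (Option (Fin k)) ℤ :=
  if t = 0 then 1
  else if h : 0 < t ∧ t ≤ (k : ℤ) then MvPolynomial.X (some ⟨(t - 1).toNat, by omega⟩) else 0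

/-- The complete homogeneous symmetric function `h_m`, expressed in the `e_i`
via the dual Jacobi–Trudi determinant. -/
noncomputable def hpolyD (k m : ℕ) : MvPolynomial (Option (Fin k)) ℤ :=
  Matrix.det (Matrix.of (fun i j : Fin m => epolyZ k (1 + (j : ℤ) - (i : ℤ))))

/-- `h_t` with the convention `h_t = 0` for `t < 0`. -/
noncomputable def hpolyDZ (k : ℕ) (t : ℤ) : MvPolynomial (Option (Fin k)) ℤ :=
  if 0 ≤ t then hpolyD k t.toNat else 0

/-- The ideal `I_q = ⟨h_{n-k+1}, …, h_{n-1}, h_n + (-1)^k q⟩` of `ℤ[q, e_1, …, e_k]`. -/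
noncomputable def qIdeal (k n : ℕ) : Ideal (MvPolynomial (Option (Fin k)) ℤ) :=
  Ideal.span ((hpolyD k '' (Set.Ioo (n - k) n)) ∪
    {hpolyD k n + ((-1) ^ k : ℤ) • MvPolynomial.X none})

/-- The quantum cohomology ring `QH*(Gr_{k,n}) = ℤ[q, e_1, …, e_k]/I_q`. -/
abbrev QHRing (k n : ℕ) := MvPolynomial (Option (Fin k)) ℤ ⧸ qIdeal k n

/-- The class of the quantum parameter `q` in `QH*(Gr_{k,n})`. -/
noncomputable def qClass (k n : ℕ) : QHRing k n := Ideal.Quotient.mk _ (MvPolynomial.X none)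

/-- The Schubert class `σ_λ ∈ QH*(Gr_{k,n})`, defined by the (quantum) Giambelli
formula `σ_λ = det(h_{λ_i + j - i})`. -/
noncomputable def sigmaClass (k n : ℕ) (lam : Fin k → ℕ) : QHRing k n :=
  Ideal.Quotient.mk _
    (Matrix.det (Matrix.of (fun i j : Fin k => hpolyDZ k ((lam i : ℤ) + (j : ℤ) - (i : ℤ)))))

/-- The special class `h_j = σ_{(j)}`. -/
noncomputable def hClass (k n : ℕ) (j : ℕ) : QHRing k n := Ideal.Quotient.mk _ (hpolyD k j)

/-- The special class `e_j = σ_{(1^j)}`. -/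
noncomputable def eClass (k n : ℕ) (j : ℕ) : QHRing k n := Ideal.Quotient.mk _ (epolyZ k (j : ℤ))

/-- The statement that `gw` is the family of structure constants (Gromov–Witten
invariants) of `QH*(Gr_{k,n})`:
`σ_μ * σ_ν = ∑_{d,λ} q^d C_{μν}^{λ,d} σ_λ` (all structure constants vanish
beyond degree `2k(n-k)`, which bounds the possible degrees). -/
def IsGWFamily (k n : ℕ)
    (gw : (Fin k → ℕ) → (Fin k → ℕ) → (Fin k → ℕ) → ℕ → ℤ) : Prop :=
  ∀ mu nu : Fin k → ℕ, mu ∈ PknFinset k n → nu ∈ PknFinset k n →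
    (sigmaClass k n mu * sigmaClass k n nu =
      ∑ e ∈ Finset.range (2 * k * (n - k) + 1), ∑ lm ∈ PknFinset k n,
        gw mu nu lm e • (qClass k n ^ e * sigmaClass k n lm)) ∧
    (∀ e lm, 2 * k * (n - k) < e → gw mu nu lm e = 0)

/-- Recover a partition in `P_{kn}` from a 01-word with `k` ones. -/
def partOfWord (k n : ℕ) (w : Fin n → Bool) : Fin k → ℕ :=
  fun i =>
    if h : (Finset.univ.filter (fun j : Fin n => w j = true)).card = k then
      ((Finset.orderIsoOfFin _ h (Fin.rev i) : Fin n) : ℕ) + 1 - (k - (i : ℕ))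
    else 0

/-- Cyclic rotation of a 01-word: `(rotWord a w)_j = w_{j+a mod n}`. -/
def rotWord (n : ℕ) (a : ℤ) (w : Fin n → Bool) : Fin n → Bool :=
  fun j =>
    if h : 0 < n then
      w ⟨(((j : ℤ) + a) % (n : ℤ)).toNat, by
        have hn0 : ((n : ℤ)) ≠ 0 := by exact_mod_cast h.ne'
        have h1 : 0 ≤ ((j : ℤ) + a) % (n : ℤ) := Int.emod_nonneg _ hn0
        have h2 : ((j : ℤ) + a) % (n : ℤ) < (n : ℤ) := Int.emod_lt_of_pos _ (by exact_mod_cast h)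
        omega⟩
    else false
  
/-- The `a`-th power of the cyclic shift `S` on `P_{kn}`:
`S^a(λ)` is the partition whose 01-word is `ω(λ)` rotated by `a`. -/
def Srot (k n : ℕ) (a : ℤ) (lam : Fin k → ℕ) : Fin k → ℕ :=
  partOfWord k n (rotWord n a (omegaWord n lam))

/-- `φ_i(λ)`: for `1 ≤ i ≤ n` the partial sum `ω_1 + ⋯ + ω_i` of the 01-word of `λ`,
extended to all `i ∈ ℤ` by `φ_{i+n} = φ_i + k`. -/
def phi (n : ℕ) {k : ℕ} (lam : Fin k → ℕ) (i : ℤ) : ℤ :=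
  ((Finset.univ.filter
      (fun j : Fin n => ((j : ℕ) : ℤ) < i % (n : ℤ) ∧ omegaWord n lam j = true)).card : ℤ)
    + (k : ℤ) * (i / (n : ℤ))

/-- `C_{λμν}(q) = ∑_e CCoef(λ,μ,ν,e) q^e`: the coefficient of `q^e` in the
Gromov–Witten generating function `q^d C^d_{λμν}` (zero unless `e` equals the
degree `d = (|λ|+|μ|+|ν|-k(n-k))/n`), where `C^d_{λμν} = C_{λμ}^{ν∨,d}`. -/
def CCoef (k n : ℕ) (gw : (Fin k → ℕ) → (Fin k → ℕ) → (Fin k → ℕ) → ℕ → ℤ)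
    (lam mu nu : Fin k → ℕ) (e : ℕ) : ℤ :=
  if ((psize lam : ℤ) + psize mu + psize nu) = (k : ℤ) * ((n : ℤ) - k) + (e : ℤ) * n then
    gw lam mu (complP n k nu) e
  else 0

/-!
Read the loop `λ[0]` as a function `L : ℤ → ℤ`: it is weakly decreasing and satisfies
`L (t + k) = L t - (n - k)`. The ones of the bi-infinite `n`-periodic 01-word of `λ` sit at
the positions `P m = L (k - m) + m`, a strictly increasing sequence with `P (m + k) = P m + n`.
Rotating the word by `k` keeps the ones at `P m - k` lying in `[0, n)`, that is those with
`k - d ≤ m < 2k - d`, where `d = diag₀ λ` is the point at which `L` crosses the diagonal: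
`L (d + 1) ≤ d ≤ L d`. Reading `λ↓` off these positions gives `λ↓ᵢ = L (i + 1 + d - k) - d`,
which is the claimed relation between the two loops.
-/

lemma antitone_of_mem_PknFinset {k n : ℕ} {lam : Fin k → ℕ} (hlam : lam ∈ PknFinset k n) :
    Antitone lam :=
  fun i j hij => (mem_filter.1 hlam).2 i j hij

lemma le_of_mem_PknFinset {k n : ℕ} {lam : Fin k → ℕ} (hlam : lam ∈ PknFinset k n) (i : Fin k) :
    lam i ≤ n - k := by
  obtain ⟨f, -, rfl⟩ := mem_image.1 (mem_filter.1 hlam).1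
  exact Nat.lt_succ_iff.mp (f i).isLt

lemma diag0_le (k : ℕ) (lam : Fin k → ℕ) : diag0 lam ≤ k :=
  (card_filter_le _ _).trans_eq (card_fin k)

lemma lt_diag0_iff {k : ℕ} {lam : Fin k → ℕ} (hlam : Antitone lam) (i : Fin k) :
    (i : ℕ) < diag0 lam ↔ (i : ℕ) < lam i := by
  constructor
  · intro hi
    by_contra! hle
    have hsub : univ.filter (fun j : Fin k => (j : ℕ) < lam j) ⊆ Iio i := fun j hj => by
      rw [mem_filter] at hj
      rw [mem_Iio]
      by_contra! hij
      have := hlam hij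
      have : (i : ℕ) ≤ j := hij
      omega
    have := card_le_card hsub
    rw [Fin.card_Iio] at this
    exact absurd hi (by unfold diag0; omega)
  · intro hi
    have hsub : Iic i ⊆ univ.filter (fun j : Fin k => (j : ℕ) < lam j) := fun j hj => by
      rw [mem_Iic] at hj
      rw [mem_filter]
      have := hlam hj
      have : (j : ℕ) ≤ i := hj
      exact ⟨mem_univ _, by omega⟩
    have := card_le_card hsub
    rwa [Fin.card_Iic] at this

lemma exists_eq_natCast_mul_add_fin {k : ℕ} (hk : 0 < k) (x : ℤ) :
    ∃ (q : ℤ) (i : Fin k), x = k * q + i := by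
  have hkz : (0 : ℤ) < k := by exact_mod_cast hk
  refine ⟨x / k, ⟨(x % k).toNat, by have := Int.emod_lt_of_pos x hkz; omega⟩, ?_⟩
  rw [Int.toNat_of_nonneg (Int.emod_nonneg x hkz.ne')]
  exact (Int.mul_ediv_add_emod x k).symm

section Loop

variable {k : ℕ} (hk : 0 < k) (n : ℕ) {lam : Fin k → ℕ}
include hk

lemma loopVal_of_eq {r t q : ℤ} {i : Fin k} (h : t - r - 1 = k * q + i) :
    loopVal n lam r t = lam i + r - q * (n - k) := by
  have hdiv : (t - r - 1) / k = q ∧ (t - r - 1) % k = i :=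
    (Int.ediv_emod_unique (by exact_mod_cast hk)).2
      ⟨by linarith, by positivity, by exact_mod_cast i.isLt⟩
  have hidx : ((t - r - 1) % (k : ℤ)).toNat = i := by rw [hdiv.2]; simp
  simp only [loopVal, dif_pos hk, hidx, hdiv.1, Fin.eta]

lemma loopVal_zero_natCast_add_one (i : Fin k) : loopVal n lam 0 ((i : ℕ) + 1) = lam i := by
  rw [loopVal_of_eq hk n (q := 0) (by ring)]
  ring

lemma loopVal_eq_loopVal_zero_sub_add (r t : ℤ) :
    loopVal n lam r t = loopVal n lam 0 (t - r) + r := by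
  obtain ⟨q, i, h⟩ := exists_eq_natCast_mul_add_fin hk (t - r - 1)
  rw [loopVal_of_eq hk n h, loopVal_of_eq hk n (q := q) (i := i) (by linear_combination h)]
  ring

lemma loopVal_add_mul (r t c : ℤ) :
    loopVal n lam r (t + k * c) = loopVal n lam r t - c * (n - k) := by
  obtain ⟨q, i, h⟩ := exists_eq_natCast_mul_add_fin hk (t - r - 1)
  rw [loopVal_of_eq hk n h, loopVal_of_eq hk n (q := q + c) (i := i) (by linear_combination h)]
  ring

lemma loopVal_antitone (hkn : k ≤ n) (hlam : lam ∈ PknFinset k n) (r : ℤ) :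
    Antitone (loopVal n lam r) := by
  refine antitone_int_of_succ_le fun t => ?_
  obtain ⟨q, i, h⟩ := exists_eq_natCast_mul_add_fin hk (t - r - 1)
  rw [loopVal_of_eq hk n h]
  by_cases hi : (i : ℕ) + 1 < k
  · rw [loopVal_of_eq hk n (i := ⟨i + 1, hi⟩) (by push_cast; linarith)]
    have : lam ⟨i + 1, hi⟩ ≤ lam i := antitone_of_mem_PknFinset hlam (Fin.le_def.2 (by simp))
    linarith
  · have hlast : ((i : ℕ) : ℤ) = k - 1 := by omega
    rw [loopVal_of_eq hk n (q := q + 1) (i := ⟨0, hk⟩) (by push_cast; linear_combination h + hlast)]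
    have := le_of_mem_PknFinset hlam ⟨0, hk⟩
    have : ((lam ⟨0, hk⟩ : ℕ) : ℤ) ≤ n - k := by omega
    linarith

lemma loopVal_eq_of_forall_fin {mu : Fin k → ℕ} (c e : ℤ)
    (h : ∀ i : Fin k, (mu i : ℤ) = loopVal n lam 0 ((i : ℕ) + 1 + c) + e) (t : ℤ) :
    loopVal n mu 0 t = loopVal n lam 0 (t + c) + e := by
  obtain ⟨q, i, hq⟩ := exists_eq_natCast_mul_add_fin hk (t - 0 - 1)
  rw [loopVal_of_eq hk n hq, h i, show t + c = (i : ℕ) + 1 + c + k * q by linarith,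
    loopVal_add_mul hk]
  ring

lemma le_loopVal_diag0 (hkn : k ≤ n) (hlam : lam ∈ PknFinset k n) :
    (diag0 lam : ℤ) ≤ loopVal n lam 0 (diag0 lam) := by
  rcases Nat.eq_zero_or_pos (diag0 lam) with hd | hd
  · rw [hd, loopVal_of_eq hk n (q := -1) (i := ⟨k - 1, by omega⟩) (by push_cast [hk]; ring)]
    omega
  · have hi : diag0 lam - 1 < k := by have := diag0_le k lam; omega
    have := (lt_diag0_iff (antitone_of_mem_PknFinset hlam) ⟨_, hi⟩).1 (by simp; omega)
    have hcast : ((diag0 lam : ℕ) : ℤ) = ((diag0 lam - 1 : ℕ) : ℤ) + 1 := by omega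
    rw [hcast, loopVal_zero_natCast_add_one hk n ⟨_, hi⟩]
    simp only at this
    omega

lemma loopVal_diag0_add_one_le (hlam : lam ∈ PknFinset k n) :
    loopVal n lam 0 (diag0 lam + 1) ≤ diag0 lam := by
  rcases (diag0_le k lam).lt_or_eq with hd | hd
  · rw [loopVal_zero_natCast_add_one hk n ⟨_, hd⟩]
    have := (lt_diag0_iff (antitone_of_mem_PknFinset hlam) ⟨_, hd⟩).not.1 (by simp)
    simp only at this
    omega
  · rw [hd, loopVal_of_eq hk n (q := 1) (i := ⟨0, hk⟩) (by push_cast; ring)]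
    have := le_of_mem_PknFinset hlam ⟨0, hk⟩
    omega

end Loop

/-- The positions of the ones of the `n`-periodic 01-word of `λ`, in increasing order:
for `0 ≤ m < k`, `onesPos n lam m` is the position of its `m`-th one, counted from `0`. -/
def onesPos (n : ℕ) {k : ℕ} (lam : Fin k → ℕ) (m : ℤ) : ℤ := loopVal n lam 0 (k - m) + m

section Word

variable {k : ℕ} (hk : 0 < k) {n : ℕ} {lam : Fin k → ℕ}
include hk

lemma onesPos_sub_one_sub (i : Fin k) : onesPos n lam (k - 1 - i) = lam i + (k - 1 - i) := by
  rw [onesPos, show (k : ℤ) - (k - 1 - i) = (i : ℕ) + 1 by ring,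
    loopVal_zero_natCast_add_one hk]

lemma onesPos_add_mul (m c : ℤ) : onesPos n lam (m + k * c) = onesPos n lam m + n * c := by
  rw [onesPos, onesPos, show (k : ℤ) - (m + k * c) = k - m + k * (-c) by ring,
    loopVal_add_mul hk]
  ring

lemma sub_le_onesPos_sub (hkn : k ≤ n) (hlam : lam ∈ PknFinset k n) {a b : ℤ} (hab : a ≤ b) :
    b - a ≤ onesPos n lam b - onesPos n lam a := by
  have := loopVal_antitone hk n hkn hlam 0 (show (k : ℤ) - b ≤ k - a by linarith)
  simp only [onesPos]
  linarith

lemma omegaWord_eq_true_iff (j : Fin n) :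
    omegaWord n lam j = true ↔ ∃ i : Fin k, (j : ℤ) = onesPos n lam (k - 1 - i) := by
  simp only [omegaWord, decide_eq_true_eq, onesPos_sub_one_sub hk]
  refine exists_congr fun i => ?_
  have := i.isLt
  omega

lemma rotWord_omegaWord_eq_true_iff (hkn : k ≤ n) (hlam : lam ∈ PknFinset k n) (a : ℤ)
    (j : Fin n) :
    rotWord n a (omegaWord n lam) j = true ↔ ∃ m : ℤ, (j : ℤ) + a = onesPos n lam m := by
  have hn : 0 < n := by omega
  have hnz : (0 : ℤ) < n := by exact_mod_cast hn
  have hP : ∀ i : Fin k, 0 ≤ onesPos n lam (k - 1 - i) ∧ onesPos n lam (k - 1 - i) < n :=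
    fun i => by
      rw [onesPos_sub_one_sub hk]
      have := le_of_mem_PknFinset hlam i
      have := i.isLt
      omega
  simp only [rotWord, dif_pos hn]
  rw [omegaWord_eq_true_iff hk]
  simp only [Int.toNat_of_nonneg (Int.emod_nonneg _ hnz.ne')]
  constructor
  · rintro ⟨i, hi⟩
    refine ⟨k - 1 - i + k * ((j + a) / n), ?_⟩
    rw [onesPos_add_mul hk, ← hi]
    exact (Int.emod_add_mul_ediv _ _).symm
  · rintro ⟨m, hm⟩
    obtain ⟨q, i, hq⟩ := exists_eq_natCast_mul_add_fin hk (k - 1 - m)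
    refine ⟨i, ?_⟩
    rw [hm, show m = k - 1 - i + k * (-q) by linarith, onesPos_add_mul hk,
      Int.add_mul_emod_self_left, Int.emod_eq_of_lt (hP i).1 (hP i).2]

lemma onesPos_mem_window_iff (hkn : k ≤ n) (hlam : lam ∈ PknFinset k n) (m : ℤ) :
    k ≤ onesPos n lam m ∧ onesPos n lam m < n + k ↔
      k - diag0 lam ≤ m ∧ m < 2 * k - diag0 lam := by
  set s : ℤ := k - diag0 lam
  have hmono {a b : ℤ} (hab : a ≤ b) : b - a ≤ onesPos n lam b - onesPos n lam a :=
    sub_le_onesPos_sub hk hkn hlam hab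
  have hper (m : ℤ) : onesPos n lam (m + k) = onesPos n lam m + n := by
    simpa using onesPos_add_mul hk (n := n) (lam := lam) m 1
  have hlo : k ≤ onesPos n lam s := by
    have := le_loopVal_diag0 hk n hkn hlam
    rw [onesPos, show (k : ℤ) - s = diag0 lam by omega]
    omega
  have hhi : onesPos n lam (s - 1) < k := by
    have := loopVal_diag0_add_one_le hk n hlam
    rw [onesPos, show (k : ℤ) - (s - 1) = diag0 lam + 1 by omega]
    omega
  constructor
  · rintro ⟨h1, h2⟩
    constructor
    · by_contra! h
      have := hmono (show m ≤ s - 1 by omega)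
      omega
    · by_contra! h
      have := hmono (show s + k ≤ m by omega)
      rw [hper] at this
      omega
  · rintro ⟨h1, h2⟩
    have := hmono h1
    have := hmono (show m ≤ s - 1 + k by omega)
    rw [hper] at this
    omega

end Word

lemma partOfWord_eq_of_strictMono {k n : ℕ} {w : Fin n → Bool} {Q : Fin k → Fin n}
    (hQ : StrictMono Q) (hw : ∀ j, w j = true ↔ j ∈ Set.range Q) (i : Fin k) :
    partOfWord k n w i = Q (Fin.rev i) + 1 - (k - i) := by
  have hS : univ.filter (fun j : Fin n => w j = true) = univ.image Q := by
    ext j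
    simp [hw]
  have hcard : (univ.filter (fun j : Fin n => w j = true)).card = k := by
    rw [hS, card_image_of_injective _ hQ.injective, card_fin]
  have hord := orderEmbOfFin_unique hcard
    (fun x => by rw [hS]; exact mem_image_of_mem Q (mem_univ x)) hQ
  simp only [partOfWord, dif_pos hcard, coe_orderIsoOfFin_apply, ← hord]

lemma Srot_apply {k n : ℕ} (hk : 0 < k) (hkn : k ≤ n) {lam : Fin k → ℕ}
    (hlam : lam ∈ PknFinset k n) (i : Fin k) :
    (Srot k n k lam i : ℤ) = loopVal n lam 0 ((i : ℕ) + 1 + (diag0 lam - k)) - diag0 lam := by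
  set s : ℤ := k - diag0 lam
  have hwin := onesPos_mem_window_iff hk hkn hlam
  have hQ (m : Fin k) : 0 ≤ onesPos n lam (m + s) - k ∧ onesPos n lam (m + s) - k < n := by
    have := (hwin (m + s)).2 ⟨by omega, by omega⟩
    omega
  let Q : Fin k → Fin n := fun m => ⟨(onesPos n lam (m + s) - k).toNat, by have := hQ m; omega⟩
  have hQval (m : Fin k) : ((Q m : ℕ) : ℤ) = onesPos n lam (m + s) - k :=
    Int.toNat_of_nonneg (hQ m).1
  have hQmono : StrictMono Q := fun a b hab => by
    have := sub_le_onesPos_sub hk hkn hlam (show (a : ℕ) + s ≤ (b : ℕ) + s by omega)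
    have := hQval a
    have := hQval b
    rw [Fin.lt_def] at hab ⊢
    omega
  have hw (j : Fin n) : rotWord n k (omegaWord n lam) j = true ↔ j ∈ Set.range Q := by
    rw [rotWord_omegaWord_eq_true_iff hk hkn hlam]
    constructor
    · rintro ⟨m, hm⟩
      have := (hwin m).1 ⟨by omega, by omega⟩
      refine ⟨⟨(m - s).toNat, by omega⟩, Fin.ext ?_⟩
      have := hQval ⟨(m - s).toNat, by omega⟩
      simp only [show (((m - s).toNat : ℕ) : ℤ) + s = m by omega] at this
      omega
    · rintro ⟨m, rfl⟩
      exact ⟨m + s, by rw [hQval]; ring⟩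
  have hrev : ((Fin.rev i : ℕ) : ℤ) = k - 1 - i := by rw [Fin.val_rev]; omega
  have hbound := sub_le_onesPos_sub hk hkn hlam (show s ≤ (Fin.rev i : ℕ) + s by omega)
  have := (hwin s).2 ⟨by omega, by omega⟩
  have hP : onesPos n lam ((Fin.rev i : ℕ) + s) =
      loopVal n lam 0 ((i : ℕ) + 1 + (diag0 lam - k)) + (k - 1 - i + s) := by
    rw [hrev, onesPos, show (k : ℤ) - (k - 1 - i + s) = (i : ℕ) + 1 + (diag0 lam - k) by omega]
  have := hQval (Fin.rev i)
  rw [Srot, partOfWord_eq_of_strictMono hQmono hw i]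
  omega

/-- The cylindric loops `λ[r]` and `λ↓[r↓]` define the same loop on the torus
`T_{kn}` (one is the shift of the other by the vector `(k, 0)`), where
`r↓ = r + diag₀(λ)` and `λ↓` has 01-word the cyclic rotation of `ω(λ)` by `k`. -/
theorem loop_down_eq_shift (k n : ℕ) (hk : 1 ≤ k) (hkn : k < n)
    (lam : Fin k → ℕ) (hlam : lam ∈ PknFinset k n) (r : ℤ) :
    ∀ t : ℤ, loopVal n (Srot k n (k : ℤ) lam) (r + (diag0 lam : ℤ)) (t + (k : ℤ)) =
      loopVal n lam r t := by
  intro t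
  have hdown := loopVal_eq_of_forall_fin hk n _ _ (Srot_apply hk hkn.le hlam)
  rw [loopVal_eq_loopVal_zero_sub_add hk, loopVal_eq_loopVal_zero_sub_add hk (lam := lam), hdown,
    show t + k - (r + diag0 lam) + (diag0 lam - k) = t - r by ring]
  ring
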